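/- arXiv:2101.09046 — 7 statements merged into one kernel-verified Lean document; each statement's English description precedes it below -/
import Mathlib

section
/- Let C be a real n×n skew-symmetric matrix. Then both I + C and I − C² are invertible, and for every vector w in ℝⁿ one has ⟨w, (I + C)⁻¹ w⟩ = ⟨w, (I − C²)⁻¹ w⟩ ≤ ⟨w, w⟩, where ⟨·,·⟩ is the standard Euclidean inner product. -/
open Matrix

private lemma dot_self_nonneg {n : ℕ} (v : Fin n → ℝ) : 0 ≤ v ⬝ᵥ v :=
  Finset.sum_nonneg fun i _ => mul_self_nonneg (v i)

private lemma skew_hsk {n : ℕ} {C : Matrix (Fin n) (Fin n) ℝ} (hC : Cᵀ = -C)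
    (a b : Fin n → ℝ) : (C *ᵥ a) ⬝ᵥ b = -(a ⬝ᵥ (C *ᵥ b)) := by
  rw [dotProduct_comm, dotProduct_mulVec, ← mulVec_transpose, hC, neg_mulVec,
    neg_dotProduct, dotProduct_comm]

private lemma skew_dot {n : ℕ} {C : Matrix (Fin n) (Fin n) ℝ} (hC : Cᵀ = -C)
    (x : Fin n → ℝ) : x ⬝ᵥ (C *ᵥ x) = 0 := by
  have h := skew_hsk hC x x
  rw [dotProduct_comm (C *ᵥ x) x] at h
  linarith

/-- For a real skew-symmetric n×n matrix `C`, both `I + C` and `I - C^2`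
are invertible, and for every `w`, `⟨w, (I+C)⁻¹ w⟩ = ⟨w, (I-C²)⁻¹ w⟩ ≤ ⟨w, w⟩`. -/
theorem skew_symmetric_inverse_inner {n : ℕ} (C : Matrix (Fin n) (Fin n) ℝ)
    (hC : Cᵀ = -C) :
    IsUnit (1 + C) ∧ IsUnit (1 - C ^ 2) ∧
    ∀ w : Fin n → ℝ,
      w ⬝ᵥ ((1 + C)⁻¹ *ᵥ w) = w ⬝ᵥ ((1 - C ^ 2)⁻¹ *ᵥ w) ∧
      w ⬝ᵥ ((1 + C)⁻¹ *ᵥ w) ≤ w ⬝ᵥ w := by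
  have hAinj : Function.Injective ((1 + C).mulVec) := by
    intro x y hxy
    have h : (1 + C) *ᵥ (x - y) = 0 := by
      rw [mulVec_sub, hxy, sub_self]
    have h2 : (x - y) ⬝ᵥ ((1 + C) *ᵥ (x - y)) = 0 := by rw [h, dotProduct_zero]
    rw [add_mulVec, one_mulVec, dotProduct_add, skew_dot hC, add_zero,
      dotProduct_self_eq_zero] at h2
    exact sub_eq_zero.mp h2
  have hAu : IsUnit (1 + C) := mulVec_injective_iff_isUnit.mp hAinj
  have hAT : (1 + C)ᵀ = 1 - C := by
    rw [transpose_add, transpose_one, hC, sub_eq_add_neg]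
  have hfac : 1 - C ^ 2 = (1 + C) * (1 - C) := by rw [sq]; noncomm_ring
  have hATu : IsUnit (1 - C) := by
    rw [isUnit_iff_isUnit_det, ← hAT, det_transpose, ← isUnit_iff_isUnit_det]
    exact hAu
  have hMu : IsUnit (1 - C ^ 2) := by rw [hfac]; exact hAu.mul hATu
  refine ⟨hAu, hMu, fun w => ?_⟩
  set v := (1 - C ^ 2)⁻¹ *ᵥ w with hv
  set s := C *ᵥ v with hs
  have hwv : (1 - C ^ 2) *ᵥ v = w := by
    rw [hv, mulVec_mulVec, mul_nonsing_inv _ ((isUnit_iff_isUnit_det _).mp hMu), one_mulVec]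
  have hw : w = v - C *ᵥ s := by
    conv_lhs => rw [← hwv]
    rw [sub_mulVec, one_mulVec, pow_two, ← mulVec_mulVec, ← hs]
  -- u := (1+C)⁻¹ *ᵥ w equals (1-C) *ᵥ v = v - s
  have huv : (1 + C)⁻¹ *ᵥ w = v - s := by
    have h1 : (1 + C) *ᵥ ((1 - C) *ᵥ v) = w := by
      rw [mulVec_mulVec, ← hfac, hwv]
    have h2 : (1 - C) *ᵥ v = v - s := by rw [sub_mulVec, one_mulVec, ← hs]
    rw [← h1, mulVec_mulVec, mulVec_mulVec,
      nonsing_inv_mul _ ((isUnit_iff_isUnit_det _).mp hAu), one_mul, h2]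
  have e1 : v ⬝ᵥ (C *ᵥ s) = -(s ⬝ᵥ s) := by
    have h := skew_hsk hC v s
    rw [← hs] at h
    linarith
  have e2 : (C *ᵥ s) ⬝ᵥ v = -(s ⬝ᵥ s) := by
    have h := skew_hsk hC s v
    rw [← hs] at h
    linarith
  have e3 : v ⬝ᵥ s = 0 := by rw [hs]; exact skew_dot hC v
  have e4 : (C *ᵥ s) ⬝ᵥ s = 0 := by
    rw [dotProduct_comm]; exact skew_dot hC s
  have key1 : w ⬝ᵥ ((1 + C)⁻¹ *ᵥ w) = v ⬝ᵥ v + s ⬝ᵥ s := by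
    rw [huv]
    conv_lhs => rw [hw]
    simp only [sub_dotProduct, dotProduct_sub]
    rw [e2, e3, e4]
    ring
  have key2 : w ⬝ᵥ v = v ⬝ᵥ v + s ⬝ᵥ s := by
    conv_lhs => rw [hw]
    simp only [sub_dotProduct]
    rw [e2]
    ring
  have key3 : w ⬝ᵥ w = v ⬝ᵥ v + 2 * (s ⬝ᵥ s) + (C *ᵥ s) ⬝ᵥ (C *ᵥ s) := by
    conv_lhs => rw [hw]
    simp only [sub_dotProduct, dotProduct_sub]
    rw [e1, e2]
    ring
  refine ⟨by rw [key1, key2], ?_⟩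
  rw [key1, key3]
  have h5 := dot_self_nonneg s
  have h6 := dot_self_nonneg (C *ᵥ s)
  linarith
end

section
/- Let A be the generator of an irreducible continuous-time Markov chain on a finite set S with unique invariant (ergodic) probability measure μ of full support, i.e. A is a real S×S matrix with A_{ij} ≥ 0 for i ≠ j, zero row sums, μ_i > 0 for all i, and Σ_i μ_i A_{ij} = 0 for all j. Let sym(A) = (A + A*)/2 where (A*)_{ij} = μ_j A_{ji}/μ_i is the adjoint of A in L²(μ). Then for every v : S → ℝ with Σ_i μ_i v_i = 0, and any u, w : S → ℝ satisfying A u = −v and sym(A) w = −v, one has ⟨v, u⟩_μ ≤ ⟨v, w⟩_μ, where ⟨f, g⟩_μ = Σ_i μ_i f_i g_i. (That is, ⟨v, −A⁻¹v⟩_μ ≤ ⟨v, −sym(A)⁻¹v⟩_μ: the active part of the diffusion coefficient is maximized by the reversible state process.) -/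
open Matrix Finset

/-! Weight the generators by `μ`: with `K = diag μ * A` the symmetrized generator gives
`diag μ * sym(A) = (K + Kᵀ)/2`, and `⟨f, A g⟩_μ = f ⬝ᵥ K *ᵥ g`. Since `K` has nonnegative
off-diagonal entries and zero row and column sums (the latter is the invariance of `μ`), its
quadratic form is `-½ Σ K_ij (f_i - f_j)²`, hence nonpositive, and it coincides with the quadratic
form of the symmetric part `Kₛ`. For `K u = -b` and `Kₛ w = -b`, expanding
`(u - w) ⬝ᵥ Kₛ *ᵥ (u - w) ≤ 0` gives exactly `b ⬝ᵥ u ≤ b ⬝ᵥ w`. -/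

namespace Matrix

variable {n : Type*} [Fintype n]

theorem sum_mul_sub_sq_eq_neg_two_mul_dotProduct_mulVec {K : Matrix n n ℝ}
    (h_row : ∀ i, ∑ j, K i j = 0) (h_col : ∀ j, ∑ i, K i j = 0) (f : n → ℝ) :
    ∑ i, ∑ j, K i j * (f i - f j) ^ 2 = -2 * (f ⬝ᵥ K *ᵥ f) := by
  have h_fi : ∑ i, ∑ j, K i j * f i ^ 2 = 0 :=
    sum_eq_zero fun i _ => by rw [← sum_mul, h_row i, zero_mul]
  have h_fj : ∑ i, ∑ j, K i j * f j ^ 2 = 0 := by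
    rw [sum_comm]
    exact sum_eq_zero fun j _ => by rw [← sum_mul, h_col j, zero_mul]
  have h_quad : f ⬝ᵥ K *ᵥ f = ∑ i, ∑ j, K i j * f j * f i := by
    simp only [dotProduct, mulVec, mul_sum]
    exact sum_congr rfl fun i _ => sum_congr rfl fun j _ => by ring
  calc ∑ i, ∑ j, K i j * (f i - f j) ^ 2
      = ∑ i, ∑ j, K i j * f i ^ 2 - 2 * ∑ i, ∑ j, K i j * f j * f i
          + ∑ i, ∑ j, K i j * f j ^ 2 := by
        simp only [mul_sum, ← sum_sub_distrib, ← sum_add_distrib]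
        exact sum_congr rfl fun i _ => sum_congr rfl fun j _ => by ring
    _ = -2 * (f ⬝ᵥ K *ᵥ f) := by rw [h_fi, h_fj, h_quad]; ring

theorem dotProduct_mulVec_self_nonpos {K : Matrix n n ℝ}
    (h_off : ∀ i j, i ≠ j → 0 ≤ K i j) (h_row : ∀ i, ∑ j, K i j = 0)
    (h_col : ∀ j, ∑ i, K i j = 0) (f : n → ℝ) :
    f ⬝ᵥ K *ᵥ f ≤ 0 := by
  have h_nonneg : 0 ≤ ∑ i, ∑ j, K i j * (f i - f j) ^ 2 := by
    refine sum_nonneg fun i _ => sum_nonneg fun j _ => ?_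
    rcases eq_or_ne i j with rfl | hij
    · simp
    · exact mul_nonneg (h_off i j hij) (sq_nonneg _)
  rw [sum_mul_sub_sq_eq_neg_two_mul_dotProduct_mulVec h_row h_col] at h_nonneg
  linarith

theorem dotProduct_le_of_mulVec_eq_neg_of_symm_part {K Kₛ : Matrix n n ℝ}
    (hK : ∀ f, f ⬝ᵥ K *ᵥ f ≤ 0) (hKₛ : K + Kᵀ = (2 : ℝ) • Kₛ) {b u w : n → ℝ}
    (hu : K *ᵥ u = -b) (hw : Kₛ *ᵥ w = -b) :
    b ⬝ᵥ u ≤ b ⬝ᵥ w := by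
  have h_polar : ∀ x y, 2 * (x ⬝ᵥ Kₛ *ᵥ y) = x ⬝ᵥ K *ᵥ y + y ⬝ᵥ K *ᵥ x := fun x y => by
    rw [← dotProduct_transpose_mulVec K x y, ← dotProduct_add, ← add_mulVec, hKₛ, smul_mulVec,
      dotProduct_smul, smul_eq_mul]
  have h_uu : u ⬝ᵥ Kₛ *ᵥ u = -(b ⬝ᵥ u) := by
    have := h_polar u u
    rw [hu, dotProduct_neg, dotProduct_comm u b] at this
    linarith
  have h_uw : u ⬝ᵥ Kₛ *ᵥ w = -(b ⬝ᵥ u) := by rw [hw, dotProduct_neg, dotProduct_comm]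
  have h_wu : w ⬝ᵥ Kₛ *ᵥ u = u ⬝ᵥ Kₛ *ᵥ w := by
    linarith [h_polar u w, h_polar w u]
  have h_ww : w ⬝ᵥ Kₛ *ᵥ w = -(b ⬝ᵥ w) := by rw [hw, dotProduct_neg, dotProduct_comm]
  have h_diff : (u - w) ⬝ᵥ Kₛ *ᵥ (u - w) ≤ 0 := by
    linarith [h_polar (u - w) (u - w), hK (u - w)]
  simp only [mulVec_sub, dotProduct_sub, sub_dotProduct] at h_diff
  linarith

end Matrix

theorem active_diffusion_reversible_max_general
    {S : Type*} [Fintype S]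
    (A : Matrix S S ℝ) (μ : S → ℝ)
    -- A is a Markov generator
    (hA_off : ∀ i j, i ≠ j → 0 ≤ A i j)
    (hA_row : ∀ i, ∑ j, A i j = 0)
    -- μ is a probability measure with full support
    (hμ_pos : ∀ i, 0 < μ i)
    -- μ is invariant for A
    (hμ_inv : ∀ j, ∑ i, μ i * A i j = 0)
    -- sym(A) = (A + A*)/2 where (A*)_{ij} = μ_j A_{ji} / μ_i
    (symA : Matrix S S ℝ)
    (h_sym : ∀ i j, symA i j = (A i j + μ j * A j i / μ i) / 2)
    (v u w : S → ℝ)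
    (hu : A *ᵥ u = -v)
    (hw : symA *ᵥ w = -v) :
    ∑ i, μ i * v i * u i ≤ ∑ i, μ i * v i * w i := by
  classical
  have h_weight : ∀ (B : Matrix S S ℝ) (f : S → ℝ), (diagonal μ * B) *ᵥ f = μ * B *ᵥ f :=
    fun B f => by rw [← mulVec_mulVec]; ext i; exact mulVec_diagonal μ _ i
  have hK_off : ∀ i j, i ≠ j → 0 ≤ (diagonal μ * A) i j := fun i j hij => by
    rw [diagonal_mul]; exact mul_nonneg (hμ_pos i).le (hA_off i j hij)
  have hK_row : ∀ i, ∑ j, (diagonal μ * A) i j = 0 := fun i => by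
    simp only [diagonal_mul, ← mul_sum, hA_row i, mul_zero]
  have hK_col : ∀ j, ∑ i, (diagonal μ * A) i j = 0 := fun j => by
    simp only [diagonal_mul, hμ_inv j]
  have hKₛ : diagonal μ * A + (diagonal μ * A)ᵀ = (2 : ℝ) • (diagonal μ * symA) := by
    ext i j
    simp only [Matrix.add_apply, transpose_apply, diagonal_mul, Matrix.smul_apply, h_sym, smul_eq_mul]
    field_simp [(hμ_pos i).ne']
  refine dotProduct_le_of_mulVec_eq_neg_of_symm_part
    (dotProduct_mulVec_self_nonpos hK_off hK_row hK_col) hKₛ (b := μ * v) ?_ ?_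
  · rw [h_weight, hu, mul_neg]
  · rw [h_weight, hw, mul_neg]

/-- For the generator `A` of an irreducible continuous-time Markov chain on a
finite set `S` with invariant probability measure `μ` of full support, let
`sym(A) = (A + A*)/2` with `(A*)_{ij} = μ_j A_{ji} / μ_i` the adjoint in `L²(μ)`.
Then for every `v` with `Σ_i μ_i v_i = 0` and any `u, w` with `A u = -v` and
`sym(A) w = -v`, one has `⟨v, u⟩_μ ≤ ⟨v, w⟩_μ`. -/
theorem active_diffusion_reversible_max
    {S : Type*} [Fintype S] [DecidableEq S] [Nonempty S]
    (A : Matrix S S ℝ) (μ : S → ℝ)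
    -- A is a Markov generator
    (hA_off : ∀ i j, i ≠ j → 0 ≤ A i j)
    (hA_row : ∀ i, ∑ j, A i j = 0)
    -- μ is a probability measure with full support
    (hμ_pos : ∀ i, 0 < μ i)
    (hμ_sum : ∑ i, μ i = 1)
    -- μ is invariant for A
    (hμ_inv : ∀ j, ∑ i, μ i * A i j = 0)
    -- irreducibility/ergodicity: the kernel of A consists of the constant functions
    (h_erg : ∀ f : S → ℝ, A *ᵥ f = 0 → ∃ c : ℝ, ∀ i, f i = c)
    -- sym(A) = (A + A*)/2 where (A*)_{ij} = μ_j A_{ji} / μ_i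
    (symA : Matrix S S ℝ)
    (h_sym : ∀ i j, symA i j = (A i j + μ j * A j i / μ i) / 2)
    (v u w : S → ℝ)
    (hv : ∑ i, μ i * v i = 0)
    (hu : A *ᵥ u = -v)
    (hw : symA *ᵥ w = -v) :
    ∑ i, μ i * v i * u i ≤ ∑ i, μ i * v i * w i :=
  active_diffusion_reversible_max_general A μ hA_off hA_row hμ_pos hμ_inv symA h_sym v u w hu hw
end

section
/- Let A be the generator of an irreducible continuous-time Markov chain on a finite set S with unique invariant probability measure μ of full support, and let sym(A) = (A + A*)/2 be its symmetric part in L²(μ). Let v : S → ℝ^d be a function with Σ_i μ_i v(i) = 0 in ℝ^d, with component functions v⁽¹⁾, …, v⁽ᵈ⁾. Let u⁽ᵏ⁾ and w⁽ᵏ⁾ satisfy A u⁽ᵏ⁾ = −v⁽ᵏ⁾ and sym(A) w⁽ᵏ⁾ = −v⁽ᵏ⁾ for each k. Define the d×d matrices D^A_{kl} = ⟨v⁽ᵏ⁾, u⁽ˡ⁾⟩_μ + ⟨v⁽ˡ⁾, u⁽ᵏ⁾⟩_μ and D^{sym}_{kl} = ⟨v⁽ᵏ⁾, w⁽ˡ⁾⟩_μ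 + ⟨v⁽ˡ⁾, w⁽ᵏ⁾⟩_μ. Then D^{sym} − D^A is positive semidefinite, i.e. αᵀ D^A α ≤ αᵀ D^{sym} α for all α ∈ ℝ^d. -/
open Matrix Finset

/-- Expansion of the weighted inner product of two linear combinations. -/
lemma ip_expand_aux {S : Type*} [Fintype S] {d : ℕ} (μ : S → ℝ) (α : Fin d → ℝ)
    (f g : Fin d → S → ℝ) :
    ∑ i, μ i * (∑ k, α k * f k i) * (∑ l, α l * g l i)
      = ∑ k, ∑ l, α k * α l * ∑ i, μ i * f k i * g l i := by
  calc ∑ i, μ i * (∑ k, α k * f k i) * (∑ l, α l * g l i)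
      = ∑ i, ∑ k, ∑ l, α k * α l * (μ i * f k i * g l i) := by
        refine Finset.sum_congr rfl fun i _ => ?_
        rw [Finset.mul_sum _ _ (μ i * ∑ k, α k * f k i)]
        have hterm : ∀ l, (μ i * ∑ k, α k * f k i) * (α l * g l i)
            = ∑ k, α k * α l * (μ i * f k i * g l i) := fun l => by
          rw [Finset.mul_sum, Finset.sum_mul]
          exact Finset.sum_congr rfl fun k _ => by ring
        simp only [hterm]
        exact Finset.sum_comm
    _ = ∑ k, ∑ i, ∑ l, α k * α l * (μ i * f k i * g l i) := Finset.sum_comm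
    _ = ∑ k, ∑ l, ∑ i, α k * α l * (μ i * f k i * g l i) :=
        Finset.sum_congr rfl fun k _ => Finset.sum_comm
    _ = ∑ k, ∑ l, α k * α l * ∑ i, μ i * f k i * g l i :=
        Finset.sum_congr rfl fun k _ => Finset.sum_congr rfl fun l _ => by
          rw [Finset.mul_sum]

/-- Multidimensional version. With `A`, `μ`, `sym(A)` as before, an
`ℝ^d`-valued speed function `v` with zero mean, and `u⁽ᵏ⁾, w⁽ᵏ⁾` solving
`A u⁽ᵏ⁾ = -v⁽ᵏ⁾`, `sym(A) w⁽ᵏ⁾ = -v⁽ᵏ⁾`, the matrix `D^{sym} - D^A` is positive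
semidefinite, where `D^A_{kl} = ⟨v⁽ᵏ⁾, u⁽ˡ⁾⟩_μ + ⟨v⁽ˡ⁾, u⁽ᵏ⁾⟩_μ` and
`D^{sym}_{kl} = ⟨v⁽ᵏ⁾, w⁽ˡ⁾⟩_μ + ⟨v⁽ˡ⁾, w⁽ᵏ⁾⟩_μ`. -/
theorem active_diffusion_matrix_reversible_max
    {S : Type*} [Fintype S] [DecidableEq S] [Nonempty S] {d : ℕ}
    (A : Matrix S S ℝ) (μ : S → ℝ)
    (hA_off : ∀ i j, i ≠ j → 0 ≤ A i j)
    (hA_row : ∀ i, ∑ j, A i j = 0)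
    (hμ_pos : ∀ i, 0 < μ i)
    (hμ_sum : ∑ i, μ i = 1)
    (hμ_inv : ∀ j, ∑ i, μ i * A i j = 0)
    (h_erg : ∀ f : S → ℝ, A *ᵥ f = 0 → ∃ c : ℝ, ∀ i, f i = c)
    (symA : Matrix S S ℝ)
    (h_sym : ∀ i j, symA i j = (A i j + μ j * A j i / μ i) / 2)
    -- components of the speed function and the solutions
    (v u w : Fin d → S → ℝ)
    (hv : ∀ k, ∑ i, μ i * v k i = 0)
    (hu : ∀ k, A *ᵥ u k = -v k)
    (hw : ∀ k, symA *ᵥ w k = -v k)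
    -- the two diffusion matrices
    (DA Dsym : Matrix (Fin d) (Fin d) ℝ)
    (hDA : ∀ k l, DA k l = (∑ i, μ i * v k i * u l i) + ∑ i, μ i * v l i * u k i)
    (hDsym : ∀ k l, Dsym k l = (∑ i, μ i * v k i * w l i) + ∑ i, μ i * v l i * w k i) :
    ∀ α : Fin d → ℝ, α ⬝ᵥ (DA *ᵥ α) ≤ α ⬝ᵥ (Dsym *ᵥ α) := by
  intro α
  classical
  have hμne : ∀ i, μ i ≠ 0 := fun i => (hμ_pos i).ne'
  -- combined functions
  obtain ⟨V, hV⟩ : ∃ V : S → ℝ, V = fun i => ∑ k, α k * v k i := ⟨_, rfl⟩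
  obtain ⟨U, hU⟩ : ∃ U : S → ℝ, U = fun i => ∑ k, α k * u k i := ⟨_, rfl⟩
  obtain ⟨W, hW⟩ : ∃ W : S → ℝ, W = fun i => ∑ k, α k * w k i := ⟨_, rfl⟩
  -- symmetric kernel m i j = μ i * symA i j
  obtain ⟨m, hm⟩ : ∃ m : S → S → ℝ, m = fun i j => μ i * symA i j := ⟨_, rfl⟩
  have hm_eq : ∀ i j, m i j = (μ i * A i j + μ j * A j i) / 2 := by
    intro i j
    have h0 := hμne i
    simp only [hm, h_sym]
    field_simp
  have hm_symm : ∀ i j, m i j = m j i := by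
    intro i j; rw [hm_eq, hm_eq]; ring
  have hm_row : ∀ i, ∑ j, m i j = 0 := by
    intro i
    calc ∑ j, m i j = ∑ j, (μ i * A i j + μ j * A j i) / 2 :=
          Finset.sum_congr rfl fun j _ => hm_eq i j
      _ = (μ i * ∑ j, A i j + ∑ j, μ j * A j i) / 2 := by
          rw [Finset.mul_sum, ← Finset.sum_add_distrib, ← Finset.sum_div]
      _ = 0 := by rw [hA_row, hμ_inv]; ring
  have hm_col : ∀ j, ∑ i, m i j = 0 := by
    intro j
    rw [show (∑ i, m i j) = ∑ i, m j i from
      Finset.sum_congr rfl fun i _ => hm_symm i j]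
    exact hm_row j
  have hm_off : ∀ i j, i ≠ j → 0 ≤ m i j := by
    intro i j hij
    rw [hm_eq]
    have h1 : 0 ≤ μ i * A i j := mul_nonneg (hμ_pos i).le (hA_off i j hij)
    have h2 : 0 ≤ μ j * A j i := mul_nonneg (hμ_pos j).le (hA_off j i hij.symm)
    linarith
  -- the bilinear (Dirichlet-type) form
  obtain ⟨B, hB⟩ : ∃ B : (S → ℝ) → (S → ℝ) → ℝ,
      B = fun f g => ∑ i, ∑ j, m i j * f i * g j := ⟨_, rfl⟩
  have hB_symm : ∀ f g, B f g = B g f := by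
    intro f g
    simp only [hB]
    rw [Finset.sum_comm]
    exact Finset.sum_congr rfl fun i _ => Finset.sum_congr rfl fun j _ => by
      rw [hm_symm]; ring
  -- nonpositivity of the quadratic form
  have hB_neg : ∀ f : S → ℝ, B f f ≤ 0 := by
    intro f
    have h1 : 0 ≤ ∑ i, ∑ j, m i j * (f i - f j) ^ 2 := by
      refine Finset.sum_nonneg fun i _ => Finset.sum_nonneg fun j _ => ?_
      rcases eq_or_ne i j with rfl | hij
      · simp
      · exact mul_nonneg (hm_off i j hij) (sq_nonneg _)
    have s1 : ∑ i, ∑ j, m i j * (f i) ^ 2 = 0 := by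
      refine Finset.sum_eq_zero fun i _ => ?_
      rw [← Finset.sum_mul, hm_row, zero_mul]
    have s2 : ∑ i, ∑ j, m i j * (f j) ^ 2 = 0 := by
      rw [Finset.sum_comm]
      refine Finset.sum_eq_zero fun j _ => ?_
      rw [← Finset.sum_mul, hm_col, zero_mul]
    have h2 : (∑ i, ∑ j, m i j * (f i - f j) ^ 2) + 2 * B f f
        = (∑ i, ∑ j, m i j * (f i) ^ 2) + ∑ i, ∑ j, m i j * (f j) ^ 2 := by
      simp only [hB, Finset.mul_sum, ← Finset.sum_add_distrib]
      exact Finset.sum_congr rfl fun i _ => Finset.sum_congr rfl fun j _ => by ring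
    linarith
  -- equations satisfied by U and W
  have husol : ∀ k i, ∑ j, A i j * u k j = -(v k i) := by
    intro k i
    have := congrFun (hu k) i
    simpa [Matrix.mulVec, dotProduct] using this
  have hwsol : ∀ k i, ∑ j, symA i j * w k j = -(v k i) := by
    intro k i
    have := congrFun (hw k) i
    simpa [Matrix.mulVec, dotProduct] using this
  have hAU : ∀ i, ∑ j, A i j * U j = -V i := by
    intro i
    calc ∑ j, A i j * U j = ∑ j, ∑ k, α k * (A i j * u k j) := by
          refine Finset.sum_congr rfl fun j _ => ?_
          simp only [hU, Finset.mul_sum]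
          exact Finset.sum_congr rfl fun k _ => by ring
      _ = ∑ k, α k * ∑ j, A i j * u k j := by
          rw [Finset.sum_comm]
          exact Finset.sum_congr rfl fun k _ => by rw [Finset.mul_sum]
      _ = -V i := by
          simp only [husol, hV, mul_neg, ← Finset.sum_neg_distrib]
  have hSW : ∀ i, ∑ j, symA i j * W j = -V i := by
    intro i
    calc ∑ j, symA i j * W j = ∑ j, ∑ k, α k * (symA i j * w k j) := by
          refine Finset.sum_congr rfl fun j _ => ?_
          simp only [hW, Finset.mul_sum]
          exact Finset.sum_congr rfl fun k _ => by ring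
      _ = ∑ k, α k * ∑ j, symA i j * w k j := by
          rw [Finset.sum_comm]
          exact Finset.sum_congr rfl fun k _ => by rw [Finset.mul_sum]
      _ = -V i := by
          simp only [hwsol, hV, mul_neg, ← Finset.sum_neg_distrib]
  -- key identities
  have e1 : ∑ i, μ i * V i * U i = -(∑ i, ∑ j, μ i * A i j * U i * U j) := by
    rw [← Finset.sum_neg_distrib]
    refine Finset.sum_congr rfl fun i _ => ?_
    have hin : ∑ j, μ i * A i j * U i * U j = μ i * (∑ j, A i j * U j) * U i := by
      rw [Finset.mul_sum, Finset.sum_mul]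
      exact Finset.sum_congr rfl fun j _ => by ring
    rw [hin, hAU i]
    ring
  have e2 : ∑ i, ∑ j, μ i * A i j * U i * U j = B U U := by
    have hswap : ∑ i, ∑ j, μ j * A j i * U i * U j
        = ∑ i, ∑ j, μ i * A i j * U i * U j := by
      rw [Finset.sum_comm]
      exact Finset.sum_congr rfl fun i _ => Finset.sum_congr rfl fun j _ => by ring
    have h2B : 2 * B U U = (∑ i, ∑ j, μ i * A i j * U i * U j)
        + ∑ i, ∑ j, μ j * A j i * U i * U j := by
      simp only [hB, Finset.mul_sum, ← Finset.sum_add_distrib]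
      refine Finset.sum_congr rfl fun i _ => Finset.sum_congr rfl fun j _ => ?_
      rw [hm_eq]; ring
    linarith
  have e3 : ∑ i, μ i * V i * U i = -(B U W) := by
    simp only [hB]
    rw [← Finset.sum_neg_distrib]
    refine Finset.sum_congr rfl fun i _ => ?_
    have hin : ∑ j, m i j * U i * W j = μ i * (∑ j, symA i j * W j) * U i := by
      rw [Finset.mul_sum, Finset.sum_mul]
      refine Finset.sum_congr rfl fun j _ => ?_
      simp only [hm]; ring
    rw [hin, hSW i]
    ring
  have e4 : ∑ i, μ i * V i * W i = -(B W W) := by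
    simp only [hB]
    rw [← Finset.sum_neg_distrib]
    refine Finset.sum_congr rfl fun i _ => ?_
    have hin : ∑ j, m i j * W i * W j = μ i * (∑ j, symA i j * W j) * W i := by
      rw [Finset.mul_sum, Finset.sum_mul]
      refine Finset.sum_congr rfl fun j _ => ?_
      simp only [hm]; ring
    rw [hin, hSW i]
    ring
  have eUU : B U U = B U W := by
    have := e1
    rw [e2] at this
    linarith [e3, this]
  -- expansion of the quadratic form at U - W
  have hexp : B (fun i => U i - W i) (fun i => U i - W i)
      = B U U - B U W - B W U + B W W := by
    simp only [hB]
    rw [← Finset.sum_sub_distrib, ← Finset.sum_sub_distrib, ← Finset.sum_add_distrib]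
    refine Finset.sum_congr rfl fun i _ => ?_
    rw [← Finset.sum_sub_distrib, ← Finset.sum_sub_distrib, ← Finset.sum_add_distrib]
    exact Finset.sum_congr rfl fun j _ => by ring
  have hneg := hB_neg (fun i => U i - W i)
  rw [hexp] at hneg
  have hBWU : B W U = B U W := hB_symm W U
  have hle : ∑ i, μ i * V i * U i ≤ ∑ i, μ i * V i * W i := by
    rw [e3, e4]
    have : B W W ≤ B U W := by linarith [eUU, hBWU, hneg]
    linarith
  -- relate the quadratic forms of the matrices to the inner products
  have gA : α ⬝ᵥ (DA *ᵥ α) = 2 * ∑ i, μ i * V i * U i := by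
    have hx := ip_expand_aux μ α v u
    have hswap : ∑ k, ∑ l, α k * α l * ∑ i, μ i * v l i * u k i
        = ∑ k, ∑ l, α k * α l * ∑ i, μ i * v k i * u l i := by
      rw [Finset.sum_comm]
      exact Finset.sum_congr rfl fun k _ => Finset.sum_congr rfl fun l _ => by ring
    calc α ⬝ᵥ (DA *ᵥ α) = ∑ k, ∑ l, α k * (DA k l * α l) := by
          simp [dotProduct, Matrix.mulVec, Finset.mul_sum]
      _ = (∑ k, ∑ l, α k * α l * ∑ i, μ i * v k i * u l i)
          + ∑ k, ∑ l, α k * α l * ∑ i, μ i * v l i * u k i := by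
          simp only [hDA]
          conv_rhs => rw [← Finset.sum_add_distrib]
          refine Finset.sum_congr rfl fun k _ => ?_
          conv_rhs => rw [← Finset.sum_add_distrib]
          exact Finset.sum_congr rfl fun l _ => by ring
      _ = 2 * ∑ k, ∑ l, α k * α l * ∑ i, μ i * v k i * u l i := by rw [hswap]; ring
      _ = 2 * ∑ i, μ i * V i * U i := by rw [← hx]; simp only [hV, hU]
  have gSym : α ⬝ᵥ (Dsym *ᵥ α) = 2 * ∑ i, μ i * V i * W i := by
    have hx := ip_expand_aux μ α v w
    have hswap : ∑ k, ∑ l, α k * α l * ∑ i, μ i * v l i * w k i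
        = ∑ k, ∑ l, α k * α l * ∑ i, μ i * v k i * w l i := by
      rw [Finset.sum_comm]
      exact Finset.sum_congr rfl fun k _ => Finset.sum_congr rfl fun l _ => by ring
    calc α ⬝ᵥ (Dsym *ᵥ α) = ∑ k, ∑ l, α k * (Dsym k l * α l) := by
          simp [dotProduct, Matrix.mulVec, Finset.mul_sum]
      _ = (∑ k, ∑ l, α k * α l * ∑ i, μ i * v k i * w l i)
          + ∑ k, ∑ l, α k * α l * ∑ i, μ i * v l i * w k i := by
          simp only [hDsym]
          conv_rhs => rw [← Finset.sum_add_distrib]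
          refine Finset.sum_congr rfl fun k _ => ?_
          conv_rhs => rw [← Finset.sum_add_distrib]
          exact Finset.sum_congr rfl fun l _ => by ring
      _ = 2 * ∑ k, ∑ l, α k * α l * ∑ i, μ i * v k i * w l i := by rw [hswap]; ring
      _ = 2 * ∑ i, μ i * V i * W i := by rw [← hx]; simp only [hV, hW]
  rw [gA, gSym]
  linarith
end

section
/- Let A be the generator of an irreducible continuous-time Markov chain on a finite set S = {1, …, n} with unique invariant probability measure μ of full support. For a probability vector ξ on S define the Donsker–Varadhan rate function I_e^A(ξ) = sup { −Σ_{i=1}^n ξ_i (A u)_i / u_i : u ∈ ℝⁿ with u_i > 0 for all i }. Then for every probability vector ξ on S, setting u_i = √(ξ_i/μ_i), one has ⟨u, −A u⟩_μ ≤ I_e^A(ξ), where ⟨f, g⟩_μ = Σ_i μ_i f_i g_i. (Since ⟨u, −A u⟩_μ = ⟨u, −sym(A) u⟩_μ equals the Donsker–Varadhan rate function of the process generated by the symmetric part sym(A), this says I_e^{sym(A)}(ξ) ≤ I_e^A(ξ) for all ξ.) -/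
open Matrix Finset Filter Topology

/-!
The Donsker–Varadhan functional `u ↦ -∑ ξᵢ (Au)ᵢ / uᵢ` evaluated at `u = √(ξ/μ)` is exactly
`⟨u, -Au⟩_μ`, because `μᵢ uᵢ = ξᵢ / uᵢ`. This `u` may vanish where `ξ` does, so it is not itself
admissible; but since `A` kills constants, `u + ε` is admissible with the same `A (u + ε) = A u`,
and its functional value tends to that of `u` as `ε → 0`. The supremum is finite because a
generator satisfies `(Au)ᵢ / uᵢ ≥ Aᵢᵢ` for positive `u`.
-/

/-- `I_e^A(ξ)` is the supremum of this functional over `u > 0`. -/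
noncomputable def dvFunctional {ι : Type*} [Fintype ι] (A : Matrix ι ι ℝ) (ξ u : ι → ℝ) : ℝ :=
  -∑ i, ξ i * (A *ᵥ u) i / u i

section Generator

variable {ι : Type*} [Fintype ι] {A : Matrix ι ι ℝ}

theorem mulVec_add_const_of_sum_row_eq_zero {R : Type*} [Semiring R] {B : Matrix ι ι R}
    (hB_row : ∀ i, ∑ j, B i j = 0) (v : ι → R) (c : R) :
    (B *ᵥ fun j => v j + c) = B *ᵥ v := by
  ext i
  simp only [mulVec, dotProduct, mul_add, sum_add_distrib, ← sum_mul, hB_row, zero_mul, add_zero]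

theorem diag_mul_le_mulVec (hA_off : ∀ i j, i ≠ j → 0 ≤ A i j) {v : ι → ℝ}
    (hv : ∀ i, 0 ≤ v i) (i : ι) : A i i * v i ≤ (A *ᵥ v) i := by
  classical
  rw [mulVec, dotProduct, ← add_sum_erase _ _ (mem_univ i), le_add_iff_nonneg_right]
  exact sum_nonneg fun j hj => mul_nonneg (hA_off i j (ne_of_mem_erase hj).symm) (hv j)

theorem dvFunctional_le_sum_diag (hA_off : ∀ i j, i ≠ j → 0 ≤ A i j) {ξ u : ι → ℝ}
    (hξ : ∀ i, 0 ≤ ξ i) (hu : ∀ i, 0 < u i) :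
    dvFunctional A ξ u ≤ ∑ i, ξ i * -A i i := by
  rw [dvFunctional, ← sum_neg_distrib]
  refine sum_le_sum fun i _ => ?_
  have hdiag : A i i ≤ (A *ᵥ u) i / u i :=
    (le_div_iff₀ (hu i)).2 (diag_mul_le_mulVec hA_off (fun j => (hu j).le) i)
  rw [mul_neg, neg_le_neg_iff, mul_div_assoc]
  exact mul_le_mul_of_nonneg_left hdiag (hξ i)

theorem bddAbove_dvFunctional (hA_off : ∀ i j, i ≠ j → 0 ≤ A i j) {ξ : ι → ℝ}
    (hξ : ∀ i, 0 ≤ ξ i) :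
    BddAbove {x : ℝ | ∃ u : ι → ℝ, (∀ i, 0 < u i) ∧ x = dvFunctional A ξ u} := by
  refine ⟨∑ i, ξ i * -A i i, ?_⟩
  rintro x ⟨u, hu, rfl⟩
  exact dvFunctional_le_sum_diag hA_off hξ hu

theorem tendsto_dvFunctional_add_const (hA_row : ∀ i, ∑ j, A i j = 0) {ξ u : ι → ℝ}
    (hsupp : ∀ i, u i = 0 → ξ i = 0) :
    Tendsto (fun ε : ℝ => dvFunctional A ξ fun j => u j + ε) (𝓝 0) (𝓝 (dvFunctional A ξ u)) := by
  simp only [dvFunctional, mulVec_add_const_of_sum_row_eq_zero hA_row]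
  refine (tendsto_finsetSum _ fun i _ => ?_).neg
  by_cases hui : u i = 0
  · simp [hsupp i hui]
  · have hden : Tendsto (fun ε : ℝ => u i + ε) (𝓝 0) (𝓝 (u i)) := by
      simpa using (continuous_const_add (u i)).tendsto 0
    exact tendsto_const_nhds.div hden hui

theorem dvFunctional_le_sSup (hA_off : ∀ i j, i ≠ j → 0 ≤ A i j)
    (hA_row : ∀ i, ∑ j, A i j = 0) {ξ u : ι → ℝ} (hξ : ∀ i, 0 ≤ ξ i) (hu : ∀ i, 0 ≤ u i)
    (hsupp : ∀ i, u i = 0 → ξ i = 0) :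
    dvFunctional A ξ u ≤
      sSup {x : ℝ | ∃ v : ι → ℝ, (∀ i, 0 < v i) ∧ x = dvFunctional A ξ v} := by
  have hlim := (tendsto_dvFunctional_add_const hA_row hsupp).mono_left
    (nhdsWithin_le_nhds (s := Set.Ioi 0))
  refine le_of_tendsto hlim (eventually_nhdsWithin_of_forall fun ε hε => ?_)
  exact le_csSup (bddAbove_dvFunctional hA_off hξ)
    ⟨_, fun i => add_pos_of_nonneg_of_pos (hu i) hε, rfl⟩

end Generator

theorem mul_sqrt_div_eq_div_sqrt_div {μ ξ : ℝ} (hμ : 0 < μ) (hξ : 0 ≤ ξ) :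
    μ * √(ξ / μ) = ξ / √(ξ / μ) := by
  rcases hξ.eq_or_lt with rfl | hξ
  · simp
  · have hsqrt : 0 < √(ξ / μ) := Real.sqrt_pos.2 (div_pos hξ hμ)
    rw [eq_div_iff hsqrt.ne', mul_assoc, Real.mul_self_sqrt (div_nonneg hξ.le hμ.le),
      mul_div_cancel₀ _ hμ.ne']

theorem sum_mul_sqrt_div_mul_neg_mulVec {ι : Type*} [Fintype ι] (A : Matrix ι ι ℝ)
    {μ ξ : ι → ℝ} (hμ : ∀ i, 0 < μ i) (hξ : ∀ i, 0 ≤ ξ i) :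
    (∑ i, μ i * √(ξ i / μ i) * (-(A *ᵥ fun j => √(ξ j / μ j)) i)) =
      dvFunctional A ξ fun j => √(ξ j / μ j) := by
  rw [dvFunctional, ← sum_neg_distrib]
  refine sum_congr rfl fun i _ => ?_
  rw [mul_sqrt_div_eq_div_sqrt_div (hμ i) (hξ i)]
  ring

theorem donsker_varadhan_reversible_min_general
    {n : ℕ}
    (A : Matrix (Fin n) (Fin n) ℝ) (μ : Fin n → ℝ)
    -- A is a Markov generator
    (hA_off : ∀ i j, i ≠ j → 0 ≤ A i j)
    (hA_row : ∀ i, ∑ j, A i j = 0)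
    -- μ is a probability measure with full support, invariant for A
    (hμ_pos : ∀ i, 0 < μ i)
    -- ξ is a probability vector
    (ξ : Fin n → ℝ)
    (hξ_nonneg : ∀ i, 0 ≤ ξ i) :
    (∑ i, μ i * Real.sqrt (ξ i / μ i) * (-(A *ᵥ fun j => Real.sqrt (ξ j / μ j)) i)) ≤
      sSup {x : ℝ | ∃ u : Fin n → ℝ, (∀ i, 0 < u i) ∧
        x = -∑ i, ξ i * (A *ᵥ u) i / u i} := by
  have hsupp : ∀ i, √(ξ i / μ i) = 0 → ξ i = 0 := fun i h => by
    have := (div_le_iff₀ (hμ_pos i)).1 (Real.sqrt_eq_zero'.1 h)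
    linarith [hξ_nonneg i]
  rw [sum_mul_sqrt_div_mul_neg_mulVec A hμ_pos hξ_nonneg]
  exact dvFunctional_le_sSup hA_off hA_row hξ_nonneg (fun i => Real.sqrt_nonneg _) hsupp

/-- For an irreducible Markov generator `A` on `S = {1,…,n}` with invariant
probability measure `μ` of full support, and any probability vector `ξ`, setting
`u_i = √(ξ_i/μ_i)` one has `⟨u, -A u⟩_μ ≤ I_e^A(ξ)`, where
`I_e^A(ξ) = sup { -Σ_i ξ_i (Au)_i/u_i : u > 0 }` is the Donsker–Varadhan rate function. -/
theorem donsker_varadhan_reversible_min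
    {n : ℕ} (hn : 0 < n)
    (A : Matrix (Fin n) (Fin n) ℝ) (μ : Fin n → ℝ)
    -- A is a Markov generator
    (hA_off : ∀ i j, i ≠ j → 0 ≤ A i j)
    (hA_row : ∀ i, ∑ j, A i j = 0)
    -- μ is a probability measure with full support, invariant for A
    (hμ_pos : ∀ i, 0 < μ i)
    (hμ_sum : ∑ i, μ i = 1)
    (hμ_inv : ∀ j, ∑ i, μ i * A i j = 0)
    -- irreducibility/ergodicity: the kernel of A consists of the constant functions
    (h_erg : ∀ f : Fin n → ℝ, A *ᵥ f = 0 → ∃ c : ℝ, ∀ i, f i = c)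
    -- ξ is a probability vector
    (ξ : Fin n → ℝ)
    (hξ_nonneg : ∀ i, 0 ≤ ξ i)
    (hξ_sum : ∑ i, ξ i = 1) :
    (∑ i, μ i * Real.sqrt (ξ i / μ i) * (-(A *ᵥ fun j => Real.sqrt (ξ j / μ j)) i)) ≤
      sSup {x : ℝ | ∃ u : Fin n → ℝ, (∀ i, 0 < u i) ∧
        x = -∑ i, ξ i * (A *ᵥ u) i / u i} :=
  donsker_varadhan_reversible_min_general A μ hA_off hA_row hμ_pos ξ hξ_nonneg
end

section
/- Fix κ, λ, γ > 0, and define, for q ∈ ℝ and z > 0, S(q, z) = (2γ + z − (λ + 2κ)(cos q − 1)) / ( (γ + z − (λ + 2κ)(cos q − 1))² − γ² + λ² sin²(q) ). Let σ² = 2κ + λ + λ²/γ. Then for every q ∈ ℝ and z > 0, lim_{ε→0⁺} ε² S(εq, ε²z) = 1 / (z + (q²/2)σ²). -/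
/-!
Under the rescaling `q ↦ εq`, `z ↦ ε²z`, the denominator of `S` is `ε²` times
`2γ w + ε² w² + λ² (sin εq / ε)²` with `w = z + (λ + 2κ)(1 - cos εq)/ε²`. Since
`(1 - cos εq)/ε² → q²/2` and `sin εq / ε → q` (continuity of `sinc` at `0`), `ε² S` tends to
`2γ / (2γ (z + (λ + 2κ) q²/2) + λ² q²) = 1 / (z + q² σ² / 2)`.
-/

open Filter Topology Real

lemma sin_mul_div_eq_mul_sinc (a : ℝ) {ε : ℝ} (hε : ε ≠ 0) :
    sin (ε * a) / ε = a * sinc (ε * a) := by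
  rcases eq_or_ne a 0 with rfl | ha
  · simp
  · rw [sinc_of_ne_zero (mul_ne_zero hε ha)]
    field_simp

lemma tendsto_sin_mul_div (a : ℝ) :
    Tendsto (fun ε => sin (ε * a) / ε) (𝓝[≠] 0) (𝓝 a) := by
  have hsinc : Tendsto (fun ε => a * sinc (ε * a)) (𝓝 0) (𝓝 a) := by
    simpa [sinc_zero] using
      ((continuous_sinc.comp (continuous_mul_const a)).const_mul a).tendsto 0
  exact (hsinc.mono_left nhdsWithin_le_nhds).congr'
    (eventually_nhdsWithin_of_forall fun ε hε => (sin_mul_div_eq_mul_sinc a hε).symm)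

lemma tendsto_one_sub_cos_mul_div_sq (a : ℝ) :
    Tendsto (fun ε => (1 - cos (ε * a)) / ε ^ 2) (𝓝[≠] 0) (𝓝 (a ^ 2 / 2)) := by
  have h := ((tendsto_sin_mul_div (a / 2)).pow 2).const_mul 2
  convert h using 2 with ε
  · rw [show ε * a = 2 * (ε * (a / 2)) by ring, cos_two_mul_eq_one_sub, div_pow]
    ring
  · ring

theorem tendsto_sq_mul_two_state_transform (A γ lam q z : ℝ) (hγ : γ ≠ 0)
    (hD : z + q ^ 2 / 2 * (A + lam ^ 2 / γ) ≠ 0) :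
    Tendsto (fun ε => ε ^ 2 * ((2 * γ + ε ^ 2 * z - A * (cos (ε * q) - 1)) /
      ((γ + ε ^ 2 * z - A * (cos (ε * q) - 1)) ^ 2 - γ ^ 2 + lam ^ 2 * sin (ε * q) ^ 2)))
      (𝓝[≠] 0) (𝓝 (1 / (z + q ^ 2 / 2 * (A + lam ^ 2 / γ)))) := by
  set w : ℝ → ℝ := fun ε => z + A * ((1 - cos (ε * q)) / ε ^ 2) with hw
  have hw_lim : Tendsto w (𝓝[≠] 0) (𝓝 (z + A * (q ^ 2 / 2))) :=
    tendsto_const_nhds.add ((tendsto_one_sub_cos_mul_div_sq q).const_mul A)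
  have hε_sq : Tendsto (fun ε : ℝ => ε ^ 2) (𝓝[≠] 0) (𝓝 0) := by
    simpa using ((tendsto_id (x := 𝓝 (0 : ℝ))).mono_left nhdsWithin_le_nhds).pow 2
  have hnum : Tendsto (fun ε => 2 * γ + ε ^ 2 * w ε) (𝓝[≠] 0) (𝓝 (2 * γ)) := by
    simpa using tendsto_const_nhds.add (hε_sq.mul hw_lim)
  have hden : Tendsto (fun ε => 2 * γ * w ε + ε ^ 2 * w ε ^ 2 + lam ^ 2 * (sin (ε * q) / ε) ^ 2)
      (𝓝[≠] 0) (𝓝 (2 * γ * (z + q ^ 2 / 2 * (A + lam ^ 2 / γ)))) := by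
    convert ((hw_lim.const_mul (2 * γ)).add (hε_sq.mul (hw_lim.pow 2))).add
      (((tendsto_sin_mul_div q).pow 2).const_mul (lam ^ 2)) using 2
    field_simp
    ring
  have hrescale : ∀ ε ≠ 0, (2 * γ + ε ^ 2 * w ε) /
      (2 * γ * w ε + ε ^ 2 * w ε ^ 2 + lam ^ 2 * (sin (ε * q) / ε) ^ 2) =
      ε ^ 2 * ((2 * γ + ε ^ 2 * z - A * (cos (ε * q) - 1)) /
        ((γ + ε ^ 2 * z - A * (cos (ε * q) - 1)) ^ 2 - γ ^ 2 + lam ^ 2 * sin (ε * q) ^ 2)) := by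
    intro ε hε
    simp only [hw]
    field_simp
    ring
  have hlim := hnum.div hden (mul_ne_zero (mul_ne_zero two_ne_zero hγ) hD)
  rw [← div_div, div_self (mul_ne_zero two_ne_zero hγ)] at hlim
  exact hlim.congr' (eventually_nhdsWithin_of_forall hrescale)

/-- Diffusive scaling limit of the Fourier–Laplace transform of the two-state
active particle: `lim_{ε→0⁺} ε² S(εq, ε²z) = 1/(z + (q²/2)σ²)` with
`σ² = 2κ + λ + λ²/γ`. -/
theorem two_state_diffusive_scaling_limit
    (κ lam γ : ℝ) (hκ : 0 < κ) (hlam : 0 < lam) (hγ : 0 < γ)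
    (S : ℝ → ℝ → ℝ)
    (hS : ∀ q z, S q z = (2 * γ + z - (lam + 2 * κ) * (Real.cos q - 1)) /
      ((γ + z - (lam + 2 * κ) * (Real.cos q - 1)) ^ 2 - γ ^ 2 +
        lam ^ 2 * Real.sin q ^ 2))
    (σsq : ℝ) (hσ : σsq = 2 * κ + lam + lam ^ 2 / γ)
    (q z : ℝ) (hz : 0 < z) :
    Tendsto (fun ε : ℝ => ε ^ 2 * S (ε * q) (ε ^ 2 * z))
      (𝓝[>] 0) (𝓝 (1 / (z + q ^ 2 / 2 * σsq))) := by
  have hσ' : σsq = (lam + 2 * κ) + lam ^ 2 / γ := by rw [hσ]; ring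
  have hD : z + q ^ 2 / 2 * σsq ≠ 0 := by rw [hσ]; positivity
  rw [hσ'] at hD ⊢
  simp only [hS]
  exact (tendsto_sq_mul_two_state_transform _ γ lam q z hγ.ne' hD).mono_left
    (nhdsWithin_mono _ fun _ hε => ne_of_gt hε)
end

section
/- Fix λ, γ > 0 and α ∈ ℝ. Then sup_{r ∈ [0,1]} ( 2λ sinh(α) r + 2γ √(r(1 − r)) ) = λ sinh(α) + √(γ² + λ² sinh²(α)). Consequently, sup over probability vectors ξ = (r, 1−r) on {1, −1} of λ(r e^{α} + (1−r) e^{−α} − 1) − γ(1 − 2√(r(1−r))) equals λ(cosh α − 1) + √(γ² + λ² sinh²(α)) − γ, so the free energy of the two-state active particle is F(α) = (2κ + γ′)(cosh α − 1) + √(γ′² + λ² sinh²(α)) − γ′ with γ′ = γ (here the Donsker–Varadhan rate function of the two-state flip chain with generator A = [[−1,1],[1,−1]] is I_e(ξ) = 1 − 2√(ξ₁ξ₋₁)). -/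
/-!
Writing `u = 2r - 1` and `w = 2√(r(1 - r))`, the point `(u, w)` lies on the unit circle for
`r ∈ [0, 1]`, and `2sr + 2g√(r(1 - r)) = s + (g w + s u)`. By Cauchy–Schwarz `g w + s u` is at
most `√(g² + s²)`, with equality when `(u, w)` is the unit vector along `(s, g)`, i.e. at
`r = (N + s) / (2N)` with `N = √(g² + s²)`. The second supremum differs from the first by the
additive constant `λ(cosh α - 1) - λ sinh α - γ`, since `r eᵅ + (1 - r) e⁻ᵅ = cosh α + (2r - 1) sinh α`.
-/

open Real Set

lemma mul_add_mul_le_sqrt_sq_add_sq {a b u w : ℝ} (h : u ^ 2 + w ^ 2 = 1) :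
    a * u + b * w ≤ √(a ^ 2 + b ^ 2) :=
  (le_abs_self _).trans <| abs_le_sqrt <| by nlinarith [sq_nonneg (a * w - b * u)]

lemma sq_two_mul_sqrt_add_sq_two_mul_sub_one {r : ℝ} (h₀ : 0 ≤ r) (h₁ : r ≤ 1) :
    (2 * √(r * (1 - r))) ^ 2 + (2 * r - 1) ^ 2 = 1 := by
  rw [mul_pow, sq_sqrt (mul_nonneg h₀ (sub_nonneg.2 h₁))]
  ring

lemma two_mul_add_two_mul_sqrt_le (s g : ℝ) {r : ℝ} (h₀ : 0 ≤ r) (h₁ : r ≤ 1) :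
    2 * s * r + 2 * g * √(r * (1 - r)) ≤ s + √(g ^ 2 + s ^ 2) :=
  calc 2 * s * r + 2 * g * √(r * (1 - r))
      = s + (g * (2 * √(r * (1 - r))) + s * (2 * r - 1)) := by ring
    _ ≤ s + √(g ^ 2 + s ^ 2) := by
      gcongr
      exact mul_add_mul_le_sqrt_sq_add_sq (sq_two_mul_sqrt_add_sq_two_mul_sub_one h₀ h₁)

lemma isGreatest_two_mul_add_two_mul_sqrt (s : ℝ) {g : ℝ} (hg : 0 < g) :
    IsGreatest ((fun r => 2 * s * r + 2 * g * √(r * (1 - r))) '' Icc 0 1)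
      (s + √(g ^ 2 + s ^ 2)) := by
  set N := √(g ^ 2 + s ^ 2)
  have hN : 0 < N := sqrt_pos.2 (by positivity)
  have hN_sq : N ^ 2 = g ^ 2 + s ^ 2 := sq_sqrt (by positivity)
  have hs : |s| ≤ N := by rw [← sqrt_sq_eq_abs]; exact sqrt_le_sqrt (by nlinarith)
  obtain ⟨hs₁, hs₂⟩ := abs_le.1 hs
  refine ⟨⟨(N + s) / (2 * N), ⟨div_nonneg (by linarith) (by positivity), ?_⟩, ?_⟩, ?_⟩
  · rw [div_le_one (by positivity)]
    linarith
  · have hprod : (N + s) / (2 * N) * (1 - (N + s) / (2 * N)) = (g / (2 * N)) ^ 2 := by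
      field_simp
      nlinarith
    simp only [hprod, sqrt_sq (by positivity : 0 ≤ g / (2 * N))]
    field_simp
    nlinarith
  · rintro _ ⟨r, ⟨h₀, h₁⟩, rfl⟩
    exact two_mul_add_two_mul_sqrt_le s g h₀ h₁

theorem two_state_free_energy_sup_general
    (lam γ α : ℝ) (hγ : 0 < γ) :
    sSup ((fun r : ℝ => 2 * lam * Real.sinh α * r + 2 * γ * Real.sqrt (r * (1 - r))) ''
        Set.Icc 0 1) =
      lam * Real.sinh α + Real.sqrt (γ ^ 2 + lam ^ 2 * Real.sinh α ^ 2) ∧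
    sSup ((fun r : ℝ => lam * (r * Real.exp α + (1 - r) * Real.exp (-α) - 1) -
          γ * (1 - 2 * Real.sqrt (r * (1 - r)))) '' Set.Icc 0 1) =
      lam * (Real.cosh α - 1) + Real.sqrt (γ ^ 2 + lam ^ 2 * Real.sinh α ^ 2) - γ := by
  have h := isGreatest_two_mul_add_two_mul_sqrt (lam * sinh α) hγ
  rw [mul_pow] at h
  have hshift : (fun r : ℝ => lam * (r * exp α + (1 - r) * exp (-α) - 1) -
        γ * (1 - 2 * √(r * (1 - r)))) =
      (· + (lam * (cosh α - 1) - lam * sinh α - γ)) ∘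
        fun r => 2 * (lam * sinh α) * r + 2 * γ * √(r * (1 - r)) := by
    funext r
    simp only [Function.comp, cosh_eq, sinh_eq]
    ring
  refine ⟨by simpa only [mul_assoc] using h.csSup_eq, ?_⟩
  rw [hshift, image_comp, (add_left_mono.map_isGreatest h).csSup_eq]
  ring

/-- Explicit optimisation in the two-state free energy computation:
`sup_{r∈[0,1]} (2λ sinh(α) r + 2γ √(r(1−r))) = λ sinh α + √(γ² + λ² sinh² α)`, and
consequently the supremum over probability vectors `ξ = (r, 1−r)` of
`λ(r e^α + (1−r)e^{−α} − 1) − γ(1 − 2√(r(1−r)))` equals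
`λ(cosh α − 1) + √(γ² + λ² sinh² α) − γ`. -/
theorem two_state_free_energy_sup
    (lam γ α : ℝ) (hlam : 0 < lam) (hγ : 0 < γ) :
    sSup ((fun r : ℝ => 2 * lam * Real.sinh α * r + 2 * γ * Real.sqrt (r * (1 - r))) ''
        Set.Icc 0 1) =
      lam * Real.sinh α + Real.sqrt (γ ^ 2 + lam ^ 2 * Real.sinh α ^ 2) ∧
    sSup ((fun r : ℝ => lam * (r * Real.exp α + (1 - r) * Real.exp (-α) - 1) -
          γ * (1 - 2 * Real.sqrt (r * (1 - r)))) '' Set.Icc 0 1) =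
      lam * (Real.cosh α - 1) + Real.sqrt (γ ^ 2 + lam ^ 2 * Real.sinh α ^ 2) - γ :=
  two_state_free_energy_sup_general lam γ α hγ
end

section
/- Fix a ∈ [−1/2, 1/2] and let A be the 3×3 matrix with rows (−1, 1/2 + a, 1/2 − a), (1/2 − a, −1, 1/2 + a), (1/2 + a, 1/2 − a, −1). Let v = (v₁, v₂, v₃) ∈ ℝ³ with v₁ + v₂ + v₃ = 0, and define w = ( (v₁ + (a + 1/2)v₂)/(3/4 + a²), ((1/2 − a)v₁ + v₂)/(3/4 + a²), 0 ). Then A w = −v and (1/3)(v₁w₁ + v₂w₂ + v₃w₃) = −(v₁v₂ + v₂v₃ + v₁v₃)/(9/4 + 3a²). Moreover −(v₁v₂ + v₂v₃ + v₁v₃) ≥ 0, so this quantity is maximal at a = 0. -/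
open Matrix

/-- For the three-state cyclic generator with asymmetry parameter
`a ∈ [−1/2, 1/2]` and any `v` with `v₁ + v₂ + v₃ = 0`, the explicitly given `w` satisfies
`A w = −v` and `(1/3)Σᵢ vᵢwᵢ = −(v₁v₂ + v₂v₃ + v₁v₃)/(9/4 + 3a²)`; moreover
`−(v₁v₂ + v₂v₃ + v₁v₃) ≥ 0`. -/
theorem three_state_active_part
    (a : ℝ) (ha : a ∈ Set.Icc (-(1/2) : ℝ) (1/2))
    (v₁ v₂ v₃ : ℝ) (hv : v₁ + v₂ + v₃ = 0)
    (A : Matrix (Fin 3) (Fin 3) ℝ)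
    (hA : A = !![-1, 1/2 + a, 1/2 - a;
                 1/2 - a, -1, 1/2 + a;
                 1/2 + a, 1/2 - a, -1])
    (v w : Fin 3 → ℝ)
    (hv' : v = ![v₁, v₂, v₃])
    (hw : w = ![(v₁ + (a + 1/2) * v₂) / (3/4 + a ^ 2),
                ((1/2 - a) * v₁ + v₂) / (3/4 + a ^ 2), 0]) :
    A *ᵥ w = -v ∧
    (1/3) * (v₁ * w 0 + v₂ * w 1 + v₃ * w 2) =
      -(v₁ * v₂ + v₂ * v₃ + v₁ * v₃) / (9/4 + 3 * a ^ 2) ∧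
    0 ≤ -(v₁ * v₂ + v₂ * v₃ + v₁ * v₃) := by
  have hd : (3/4 + a ^ 2 : ℝ) ≠ 0 := by positivity
  have hd' : (9/4 + 3 * a ^ 2 : ℝ) ≠ 0 := by positivity
  have hv3 : v₃ = -(v₁ + v₂) := by linarith
  refine ⟨?_, ?_, ?_⟩
  · subst hA hv' hw
    funext i
    fin_cases i <;>
      simp [Matrix.mulVec, dotProduct, Fin.sum_univ_succ] <;>
      field_simp <;> ring_nf <;> nlinarith [sq_nonneg a, hv3]
  · subst hw
    simp only [Matrix.cons_val_zero, Matrix.cons_val_one, Matrix.head_cons,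
      Matrix.cons_val_two, Matrix.tail_cons]
    rw [hv3]
    field_simp
    ring
  · rw [hv3]; nlinarith [sq_nonneg (v₁ + v₂), sq_nonneg (v₁ - v₂)]
end
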